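/- arXiv:1305.0428 — 2 statements merged into one kernel-verified Lean document; each statement's English description precedes it below -/
import Mathlib

section
/- Let m be a natural number, let σ be a permutation of Fin m, and let d : Fin m → ℕ be such that d(σ(i)) = d(i) for all i and d(i) is odd for all i. Let τ be the permutation of the sigma type Σ (i : Fin m), Fin (d i) defined by τ⟨i, k⟩ = ⟨σ(i), k'⟩, where k' is the image of k under the cast Fin (d i) ≃ Fin (d (σ i)) along the equality d(σ(i)) = d(i). Then sign τ = sign σ. -/
/-!
Cut each block of size `n` into a block of size `n % 2` and two blocks of size `n / 2`. The block
permutation becomes a sum of three block permutations, the last two equal, so its sign is that of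
the permutation of the blocks of size `n % 2`. When every block size is odd these blocks are
singletons, and that permutation is `σ` itself.
-/

open Equiv Equiv.Perm

theorem map_cast {ι : Sort*} {F G : ι → Sort*} (f : ∀ i, F i → G i) {i j : ι} (h : i = j)
    (x : F i) : f j (cast (congrArg F h) x) = cast (congrArg G h) (f i x) := by
  subst h
  rfl

section BlockPerm

variable {α ι : Type*} (F : ι → Type*) (d : α → ι) (σ : Perm α)
  (hd : ∀ a, d (σ a) = d a)

def blockPerm : Perm (Σ a, F (d a)) :=
  sigmaCongr σ fun a => Equiv.cast (congrArg F (hd a).symm)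

theorem blockPerm_apply (a : α) (x : F (d a)) :
    blockPerm F d σ hd ⟨a, x⟩ = ⟨σ a, cast (congrArg F (hd a).symm) x⟩ := rfl

variable {F} [Fintype α] [DecidableEq α] [∀ i, Fintype (F i)] [∀ i, DecidableEq (F i)]

theorem sign_blockPerm_of_unique [∀ a, Unique (F (d a))] :
    sign (blockPerm F d σ hd) = sign σ :=
  sign_eq_sign_of_equiv _ _ (sigmaUnique α fun a => F (d a)) fun _ => rfl

variable {G : ι → Type*} [∀ i, Fintype (G i)] [∀ i, DecidableEq (G i)]

theorem sign_blockPerm_congr (φ : ∀ i, F i ≃ G i) :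
    sign (blockPerm F d σ hd) = sign (blockPerm G d σ hd) :=
  sign_eq_sign_of_equiv _ _ (sigmaCongrRight fun a => φ (d a)) fun ⟨a, x⟩ =>
    congrArg (Sigma.mk (σ a)) (map_cast (fun i => φ i) (hd a).symm x)

theorem sign_blockPerm_sum :
    sign (blockPerm (fun i => F i ⊕ G i) d σ hd) =
      sign (blockPerm F d σ hd) * sign (blockPerm G d σ hd) := by
  rw [← sign_sumCongr]
  refine sign_eq_sign_of_equiv _ _ (sigmaSumDistrib (fun a => F (d a)) fun a => G (d a))
    fun ⟨a, x⟩ => ?_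
  rcases x with y | y
  · rw [blockPerm_apply, ← map_cast (fun i => @Sum.inl (F i) (G i)) (hd a).symm]
    rfl
  · rw [blockPerm_apply, ← map_cast (fun i => @Sum.inr (F i) (G i)) (hd a).symm]
    rfl

end BlockPerm

def finEquivModTwoSumHalf (n : ℕ) : Fin n ≃ Fin (n % 2) ⊕ (Fin (n / 2) ⊕ Fin (n / 2)) :=
  (finCongr (by omega)).trans <|
    finSumFinEquiv.symm.trans (sumCongr (Equiv.refl _) finSumFinEquiv.symm)

theorem sign_blockPerm_fin_eq_mod_two {α : Type*} [Fintype α] [DecidableEq α] (d : α → ℕ)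
    (σ : Perm α) (hd : ∀ a, d (σ a) = d a) :
    sign (blockPerm Fin d σ hd) = sign (blockPerm (fun n => Fin (n % 2)) d σ hd) := by
  rw [sign_blockPerm_congr d σ hd finEquivModTwoSumHalf,
    sign_blockPerm_sum (F := fun n => Fin (n % 2)) (G := fun n => Fin (n / 2) ⊕ Fin (n / 2)),
    sign_blockPerm_sum (F := fun n => Fin (n / 2)) (G := fun n => Fin (n / 2)),
    Int.units_mul_self, mul_one]

/-- Odd-block-size sign rule: if blocks of odd sizes `d i` are permuted in the same way
as their labels by `σ`, the induced permutation `τ` of the disjoint union of the blocks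
has the same sign as `σ`. -/
theorem sign_sigma_perm_of_odd_blocks (m : ℕ) (σ : Equiv.Perm (Fin m))
    (d : Fin m → ℕ) (hd : ∀ i, d (σ i) = d i) (hodd : ∀ i, Odd (d i))
    (τ : Equiv.Perm (Σ i : Fin m, Fin (d i)))
    (hτ : ∀ p : Σ i : Fin m, Fin (d i),
      τ p = ⟨σ p.1, Fin.cast (hd p.1).symm p.2⟩) :
    Equiv.Perm.sign τ = Equiv.Perm.sign σ := by
  have hτ_blockPerm : τ = blockPerm Fin d σ hd := Equiv.ext fun p => by
    rw [hτ, Fin.cast_eq_cast]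
    rfl
  have hunique : ∀ i, Unique (Fin (d i % 2)) := fun i =>
    (finCongr (Nat.odd_iff.mp (hodd i))).unique
  rw [hτ_blockPerm, sign_blockPerm_fin_eq_mod_two]
  exact sign_blockPerm_of_unique (F := fun n => Fin (n % 2)) d σ hd
end

section
/- Let α be a finite type and let σ, φ be permutations of α such that φ commutes with σ, σ has no fixed points, and every cycle in the cycle decomposition of σ has odd length (i.e., every entry of the cycle type of σ is odd). Conjugation by φ maps the finset of cycle factors of σ to itself, hence induces a permutation φ̄ of the cycle factors of σ; then sign φ = sign φ̄. -/
section CVhelpers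
open Equiv Equiv.Perm Finset

variable {α : Type*} [Fintype α] [DecidableEq α]

theorem sign_prod_cf (f : Perm α) : sign f = ∏ c ∈ f.cycleFactorsFinset, sign c := by
  conv_lhs => rw [← cycleFactorsFinset_noncommProd f]
  rw [Finset.map_noncommProd, Finset.noncommProd_eq_prod]
  rfl

theorem pow_eq_on_support {ψ ζ : Perm α} (hζ : ζ ∈ ψ.cycleFactorsFinset) {x : α}
    (hx : x ∈ ζ.support) (i : ℕ) : (ζ ^ i) x = (ψ ^ i) x := by
  induction i with
  | zero => rfl
  | succ n ih =>
    have hmem : (ζ ^ n) x ∈ ζ.support := by rwa [pow_apply_mem_support]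
    calc (ζ ^ (n+1)) x = ζ ((ζ ^ n) x) := by rw [pow_succ', Perm.mul_apply]
      _ = ψ ((ζ ^ n) x) := (mem_cycleFactorsFinset_iff.mp hζ).2 _ hmem
      _ = ψ ((ψ ^ n) x) := by rw [ih]
      _ = (ψ ^ (n+1)) x := by rw [pow_succ', Perm.mul_apply]

theorem exists_pow_eq_of_commute {c g : Perm α} (hc : c.IsCycle) (hg : Commute g c) :
    ∃ t : ℕ, ∀ x ∈ c.support, g x = (c ^ t) x := by
  obtain ⟨x₀, hx₀, -⟩ := id hc
  have hx₀' : c x₀ ≠ x₀ := hx₀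
  have hgx₀ : c (g x₀) ≠ g x₀ := by
    rw [← Perm.mul_apply, ← hg.eq, Perm.mul_apply]
    exact fun h => hx₀' (g.injective h)
  obtain ⟨t, ht⟩ := (hc.exists_pow_eq hx₀' hgx₀)
  refine ⟨t, fun x hx => ?_⟩
  have hsc : c.SameCycle x₀ x := hc.sameCycle hx₀' (mem_support.mp hx)
  obtain ⟨j, -, hj⟩ := hsc.exists_pow_eq'
  subst hj
  calc g ((c ^ j) x₀) = (c ^ j) (g x₀) := by
        rw [← Perm.mul_apply, ← Perm.mul_apply, (hg.pow_right j).eq]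
    _ = (c ^ j) ((c ^ t) x₀) := by rw [ht]
    _ = (c ^ t) ((c ^ j) x₀) := by rw [← Perm.mul_apply, ← Perm.mul_apply, pow_mul_comm]

theorem mem_cycleType_of_mem {σ c : Perm α} (hc : c ∈ σ.cycleFactorsFinset) :
    c.support.card ∈ σ.cycleType := by
  rw [Equiv.Perm.cycleType_def]
  exact Multiset.mem_map_of_mem _ hc

theorem pow_fix_of_bar_fix {σ ψ : Perm α} (hodd : ∀ n ∈ σ.cycleType, Odd n)
    {e : ℕ} (he : orderOf ψ = 2 ^ e) {c : Perm α} (hc : c ∈ σ.cycleFactorsFinset)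
    {j : ℕ} (hj : ψ ^ j * c * (ψ ^ j)⁻¹ = c) : ∀ x ∈ c.support, (ψ ^ j) x = x := by
  have hcyc := (mem_cycleFactorsFinset_iff.mp hc).1
  have hcm : Commute (ψ ^ j) c := mul_inv_eq_iff_eq_mul.mp hj
  obtain ⟨t, ht⟩ := exists_pow_eq_of_commute hcyc hcm
  have key : ∀ n : ℕ, ∀ x ∈ c.support, ((ψ ^ j) ^ n) x = (c ^ (t * n)) x := by
    intro n
    induction n with
    | zero => simp
    | succ n ih =>
      intro x hx
      have hmem : (c ^ (t * n)) x ∈ c.support := by rwa [pow_apply_mem_support]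
      calc ((ψ ^ j) ^ (n+1)) x = (ψ ^ j) (((ψ ^ j) ^ n) x) := by
            rw [pow_succ', Perm.mul_apply]
        _ = (ψ ^ j) ((c ^ (t * n)) x) := by rw [ih x hx]
        _ = (c ^ t) ((c ^ (t * n)) x) := ht _ hmem
        _ = (c ^ (t * (n+1))) x := by
            rw [← Perm.mul_apply, ← pow_add]
            congr 2
            ring
  have hψe : (ψ ^ j) ^ (2 ^ e) = 1 := by
    rw [← pow_mul, mul_comm, pow_mul, ← he, pow_orderOf_eq_one, one_pow]
  have h2 : c ^ (t * 2 ^ e) = 1 := by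
    ext y
    by_cases hy : y ∈ c.support
    · rw [← key _ y hy, hψe]
    · have : y ∉ (c ^ (t * 2 ^ e)).support := fun h => hy (Perm.support_pow_le c _ h)
      rw [Perm.notMem_support.mp this]; rfl
  have hmdvd : orderOf c ∣ t * 2 ^ e := orderOf_dvd_of_pow_eq_one h2
  have hmodd : Odd (orderOf c) := by
    rw [hcyc.orderOf]
    exact hodd _ (mem_cycleType_of_mem hc)
  have hcop : (orderOf c).Coprime (2 ^ e) :=
    Nat.Coprime.pow_right e (Odd.coprime_two_right hmodd)
  have hct : c ^ t = 1 := by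
    rw [← orderOf_dvd_iff_pow_eq_one]
    exact hcop.dvd_of_dvd_mul_right hmdvd
  intro x hx
  rw [ht x hx, hct]; rfl

theorem cycleOf_conj_comm {σ : Perm α} (hfix : ∀ x, σ x ≠ x)
    (g : Perm α) (hg : Commute g σ) (x : α) :
    σ.cycleOf (g x) = g * σ.cycleOf x * g⁻¹ := by
  have hx : σ.cycleOf x ∈ σ.cycleFactorsFinset :=
    cycleOf_mem_cycleFactorsFinset_iff.mpr (mem_support.mpr (hfix x))
  have hc' : g * σ.cycleOf x * g⁻¹ ∈ σ.cycleFactorsFinset := by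
    have := (mem_cycleFactorsFinset_conj σ g (σ.cycleOf x)).mpr hx
    rwa [show g * σ * g⁻¹ = σ by rw [hg.eq]; group] at this
  have hxs : g x ∈ (g * σ.cycleOf x * g⁻¹).support := by
    rw [Equiv.Perm.support_conj, Finset.mem_map]
    exact ⟨x, mem_support_cycleOf_iff.mpr ⟨Equiv.Perm.SameCycle.refl _ _,
      mem_support.mpr (hfix x)⟩, rfl⟩
  exact (cycle_is_cycleOf hxs hc').symm

theorem key_two_pow (σ ψ : Perm α) (hcomm : Commute ψ σ) (hfix : ∀ x, σ x ≠ x)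
    (hodd : ∀ n ∈ σ.cycleType, Odd n) {e : ℕ} (he : orderOf ψ = 2 ^ e)
    (ψbar : Perm {c // c ∈ σ.cycleFactorsFinset})
    (hbar : ∀ c : {c // c ∈ σ.cycleFactorsFinset},
      (ψbar c : Perm α) = ψ * ↑c * ψ⁻¹) :
    Equiv.Perm.sign ψ = Equiv.Perm.sign ψbar := by
  rcases isEmpty_or_nonempty α with hα | hα
  · have hψ1 : ψ = 1 := by ext a; exact (hα.false a).elim
    have hσ1 : σ = 1 := by ext a; exact (hα.false a).elim
    have hbar1 : ψbar = 1 := by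
      ext ⟨c, hc⟩ a
      rw [hσ1, cycleFactorsFinset_one] at hc
      exact absurd hc (Finset.notMem_empty c)
    rw [hψ1, hbar1, map_one, map_one]
  · -- main case
    have hCFmem : ∀ x : α, σ.cycleOf x ∈ σ.cycleFactorsFinset := fun x =>
      cycleOf_mem_cycleFactorsFinset_iff.mpr (mem_support.mpr (hfix x))
    let cyc : α → {c // c ∈ σ.cycleFactorsFinset} := fun x => ⟨σ.cycleOf x, hCFmem x⟩
    have hxcyc : ∀ x : α, x ∈ (cyc x : Perm α).support := fun x =>
      mem_support_cycleOf_iff.mpr ⟨Equiv.Perm.SameCycle.refl _ _, mem_support.mpr (hfix x)⟩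
    have hbar_pow : ∀ (n : ℕ) (c : {c // c ∈ σ.cycleFactorsFinset}), ((ψbar ^ n) c : Perm α) = ψ ^ n * ↑c * (ψ ^ n)⁻¹ := by
      intro n
      induction n with
      | zero => intro c; simp
      | succ n ih =>
        intro c
        calc ((ψbar ^ (n+1)) c : Perm α) = ((ψbar ^ n) (ψbar c) : Perm α) := by
              rw [pow_succ, Perm.mul_apply]
          _ = ψ ^ n * (ψbar c : Perm α) * (ψ ^ n)⁻¹ := ih _
          _ = ψ ^ n * (ψ * ↑c * ψ⁻¹) * (ψ ^ n)⁻¹ := by rw [hbar c]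
          _ = ψ ^ (n+1) * ↑c * (ψ ^ (n+1))⁻¹ := by rw [pow_succ]; group
    have hconjpt : ∀ (i : ℕ) (x : α), cyc ((ψ ^ i) x) = (ψbar ^ i) (cyc x) := by
      intro i x
      apply Subtype.ext
      rw [hbar_pow]
      exact cycleOf_conj_comm hfix (ψ ^ i) (hcomm.pow_left i) x
    have hfixiff : ∀ (c : {c // c ∈ σ.cycleFactorsFinset}) (x : α), x ∈ (c : Perm α).support → ∀ j : ℕ,
        ((ψ ^ j) x = x ↔ (ψbar ^ j) c = c) := by
      intro c x hx j
      constructor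
      · intro h
        have h1 : cyc ((ψ ^ j) x) = (ψbar ^ j) (cyc x) := hconjpt j x
        have h2 : cyc x = c := Subtype.ext (cycle_is_cycleOf hx c.2).symm
        rw [h, h2] at h1
        exact h1.symm
      · intro h
        have h' : ψ ^ j * ↑c * (ψ ^ j)⁻¹ = (c : Perm α) := by
          rw [← hbar_pow j c, h]
        exact pow_fix_of_bar_fix hodd he c.2 h' x hx
    have hsupp : ∀ x : α, x ∈ ψ.support ↔ (cyc x) ∈ ψbar.support := by
      intro x
      rw [mem_support, mem_support, not_iff_not.symm, not_not, not_not]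
      have := hfixiff (cyc x) x (hxcyc x) 1
      rwa [pow_one, pow_one] at this
    -- nonemptiness of supports of cycle factors
    have hQne : ∀ ζ ∈ ψ.cycleFactorsFinset, ζ.support.Nonempty := fun ζ h =>
      (mem_cycleFactorsFinset_iff.mp h).1.nonempty_support
    let pt : Perm α → α := fun ζ =>
      if h : ζ.support.Nonempty then h.choose else Classical.arbitrary α
    have hpt : ∀ {ζ}, ζ ∈ ψ.cycleFactorsFinset → pt ζ ∈ ζ.support := by
      intro ζ hζ
      have h := hQne ζ hζ
      simp only [pt, dif_pos h]
      exact h.choose_spec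
    let F : Perm α → Perm {c // c ∈ σ.cycleFactorsFinset} := fun ζ => ψbar.cycleOf (cyc (pt ζ))
    have hF : ∀ {ζ}, ζ ∈ ψ.cycleFactorsFinset → ∀ x ∈ ζ.support,
        F ζ = ψbar.cycleOf (cyc x) := by
      intro ζ hζ x hx
      have hcycζ := (mem_cycleFactorsFinset_iff.mp hζ).1
      have hsame : ζ.SameCycle (pt ζ) x :=
        hcycζ.sameCycle (mem_support.mp (hpt hζ)) (mem_support.mp hx)
      obtain ⟨i, -, hi⟩ := hsame.exists_pow_eq'
      have hxi : x = (ψ ^ i) (pt ζ) := by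
        rw [← hi, pow_eq_on_support hζ (hpt hζ)]
      rw [hxi, hconjpt i (pt ζ), cycleOf_self_apply_pow]
    have hFmem : ∀ ζ ∈ ψ.cycleFactorsFinset, F ζ ∈ ψbar.cycleFactorsFinset := by
      intro ζ hζ
      have hx : pt ζ ∈ ψ.support := mem_cycleFactorsFinset_support_le hζ (hpt hζ)
      exact cycleOf_mem_cycleFactorsFinset_iff.mpr ((hsupp _).mp hx)
    have main : ∀ ξ ∈ ψbar.cycleFactorsFinset,
        (∏ ζ ∈ ψ.cycleFactorsFinset with F ζ = ξ, Equiv.Perm.sign ζ) = Equiv.Perm.sign ξ := by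
      intro ξ hξ
      have hξcyc := (mem_cycleFactorsFinset_iff.mp hξ).1
      obtain ⟨c₀, hc₀⟩ := hξcyc.nonempty_support
      have hξeq : ξ = ψbar.cycleOf c₀ := cycle_is_cycleOf hc₀ hξ
      have hc₀b : c₀ ∈ ψbar.support := mem_cycleFactorsFinset_support_le hξ hc₀
      have hsgn : ∀ ζ ∈ ψ.cycleFactorsFinset.filter (fun ζ => F ζ = ξ),
          Equiv.Perm.sign ζ = Equiv.Perm.sign ξ := by
        intro ζ hζ'
        rw [Finset.mem_filter] at hζ'
        obtain ⟨hζ, hFζ⟩ := hζ'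
        have hxζ : pt ζ ∈ ζ.support := hpt hζ
        set x := pt ζ with hxdef
        have hζcyc := (mem_cycleFactorsFinset_iff.mp hζ).1
        have hxψ : x ∈ ψ.support := mem_cycleFactorsFinset_support_le hζ hxζ
        have hξeq2 : ξ = ψbar.cycleOf (cyc x) := by rw [← hFζ, hF hζ x hxζ]
        have hcycmem : cyc x ∈ ξ.support := by
          rw [hξeq2]
          exact mem_support_cycleOf_iff.mpr ⟨Equiv.Perm.SameCycle.refl _ _, (hsupp x).mp hxψ⟩
        have hno : orderOf ζ = orderOf ξ := by
          have hdvd1 : orderOf ξ ∣ orderOf ζ := by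
            apply orderOf_dvd_of_pow_eq_one
            rw [hξcyc.pow_eq_one_iff' (mem_support.mp hcycmem)]
            have hψn : (ψ ^ orderOf ζ) x = x := by
              rw [← pow_eq_on_support hζ hxζ, pow_orderOf_eq_one, Perm.one_apply]
            have hb := (hfixiff (cyc x) x (hxcyc x) (orderOf ζ)).mp hψn
            rw [pow_eq_on_support hξ hcycmem]
            exact hb
          have hdvd2 : orderOf ζ ∣ orderOf ξ := by
            apply orderOf_dvd_of_pow_eq_one
            rw [hζcyc.pow_eq_one_iff' (mem_support.mp hxζ)]
            have hbarn : (ψbar ^ orderOf ξ) (cyc x) = cyc x := by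
              rw [← pow_eq_on_support hξ hcycmem, pow_orderOf_eq_one, Perm.one_apply]
            have ha := (hfixiff (cyc x) x (hxcyc x) (orderOf ξ)).mpr hbarn
            rw [pow_eq_on_support hζ hxζ]
            exact ha
          exact Nat.dvd_antisymm hdvd2 hdvd1
        have hcard : ζ.support.card = ξ.support.card := by
          rw [← hζcyc.orderOf, ← hξcyc.orderOf, hno]
        rw [hζcyc.sign, hξcyc.sign, hcard]
      have hcard2 : ((c₀ : Perm α).support).card =
          (ψ.cycleFactorsFinset.filter (fun ζ => F ζ = ξ)).card := by
        apply Finset.card_bij (fun x _ => ψ.cycleOf x)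
        · intro x hx
          have hcycx : cyc x = c₀ := Subtype.ext (cycle_is_cycleOf hx c₀.2).symm
          have hxψ : x ∈ ψ.support := (hsupp x).mpr (hcycx ▸ hc₀b)
          have hmem : ψ.cycleOf x ∈ ψ.cycleFactorsFinset :=
            cycleOf_mem_cycleFactorsFinset_iff.mpr hxψ
          have hxin : x ∈ (ψ.cycleOf x).support :=
            mem_support_cycleOf_iff.mpr ⟨Equiv.Perm.SameCycle.refl _ _, hxψ⟩
          rw [Finset.mem_filter]
          exact ⟨hmem, by rw [hF hmem x hxin, hcycx, ← hξeq]⟩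
        · intro x hx y hy hxy
          have hcx : cyc x = c₀ := Subtype.ext (cycle_is_cycleOf hx c₀.2).symm
          have hcy : cyc y = c₀ := Subtype.ext (cycle_is_cycleOf hy c₀.2).symm
          have hyψ : y ∈ ψ.support := (hsupp y).mpr (hcy ▸ hc₀b)
          have hyin : y ∈ (ψ.cycleOf x).support := by
            rw [hxy]
            exact mem_support_cycleOf_iff.mpr ⟨Equiv.Perm.SameCycle.refl _ _, hyψ⟩
          have hsc : ψ.SameCycle x y := (mem_support_cycleOf_iff.mp hyin).1
          obtain ⟨i, -, hi⟩ := hsc.exists_pow_eq'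
          have hb : (ψbar ^ i) (cyc x) = cyc x := by
            rw [← hconjpt i x, hi, hcy, hcx]
          have hfix' : (ψ ^ i) x = x := (hfixiff (cyc x) x (hxcyc x) i).mpr hb
          rw [← hi, hfix']
        · intro ζ hζ'
          rw [Finset.mem_filter] at hζ'
          obtain ⟨hζ, hFζ⟩ := hζ'
          have hxζ : pt ζ ∈ ζ.support := hpt hζ
          have h1 : ψbar.cycleOf (cyc (pt ζ)) = ξ := by rw [← hF hζ _ hxζ, hFζ]
          have hsc : ψbar.SameCycle (cyc (pt ζ)) c₀ := by
            have hin : c₀ ∈ (ψbar.cycleOf (cyc (pt ζ))).support := by rw [h1]; exact hc₀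
            exact (mem_support_cycleOf_iff.mp hin).1
          obtain ⟨i, -, hi⟩ := hsc.exists_pow_eq'
          have hcyceq : cyc ((ψ ^ i) (pt ζ)) = c₀ := by rw [hconjpt, hi]
          refine ⟨(ψ ^ i) (pt ζ), ?_, ?_⟩
          · have hx' := hxcyc ((ψ ^ i) (pt ζ))
            rwa [hcyceq] at hx'
          · rw [cycleOf_self_apply_pow]
            exact (cycle_is_cycleOf hxζ hζ).symm
      have hmodd : Odd ((c₀ : Perm α).support.card) := hodd _ (mem_cycleType_of_mem c₀.2)
      rw [Finset.prod_congr rfl hsgn, Finset.prod_const, ← hcard2]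
      rcases Int.units_eq_one_or (Equiv.Perm.sign ξ) with h | h <;> rw [h]
      · exact one_pow _
      · exact hmodd.neg_one_pow
    calc Equiv.Perm.sign ψ = ∏ ζ ∈ ψ.cycleFactorsFinset, Equiv.Perm.sign ζ := sign_prod_cf ψ
      _ = ∏ ξ ∈ ψbar.cycleFactorsFinset, ∏ ζ ∈ ψ.cycleFactorsFinset with F ζ = ξ,
            Equiv.Perm.sign ζ := (Finset.prod_fiberwise_of_maps_to hFmem _).symm
      _ = ∏ ξ ∈ ψbar.cycleFactorsFinset, Equiv.Perm.sign ξ := Finset.prod_congr rfl main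
      _ = Equiv.Perm.sign ψbar := (sign_prod_cf ψbar).symm

end CVhelpers

section CVmain
open Equiv Equiv.Perm Finset

/-- Conant–Vogtmann sign rule behind Lemma 3.2: if `φ` commutes with a fixed-point-free
permutation `σ` all of whose cycles have odd length, then conjugation by `φ` permutes the
cycle factors of `σ`, and the sign of `φ` equals the sign of the induced permutation of
the cycle factors. -/
theorem sign_eq_sign_induced_on_cycleFactors {α : Type*} [Fintype α] [DecidableEq α]
    (σ φ : Equiv.Perm α) (hcomm : Commute φ σ)
    (hfix : ∀ x, σ x ≠ x) (hodd : ∀ n ∈ σ.cycleType, Odd n) :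
    (∀ c ∈ σ.cycleFactorsFinset, φ * c * φ⁻¹ ∈ σ.cycleFactorsFinset) ∧
    ∀ φbar : Equiv.Perm {c // c ∈ σ.cycleFactorsFinset},
      (∀ c : {c // c ∈ σ.cycleFactorsFinset}, (φbar c : Equiv.Perm α) = φ * ↑c * φ⁻¹) →
      Equiv.Perm.sign φ = Equiv.Perm.sign φbar := by
  constructor
  · intro c hc
    have h := (mem_cycleFactorsFinset_conj σ φ c).mpr hc
    rwa [show φ * σ * φ⁻¹ = σ by rw [hcomm.eq]; group] at h
  · intro φbar hφbar
    have hN : 0 < orderOf φ := orderOf_pos φ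
    set N := orderOf φ with hNdef
    set v := N.factorization 2 with hvdef
    set k := N / 2 ^ v with hkdef
    have hk2 : ¬ 2 ∣ k := Nat.not_dvd_ordCompl Nat.prime_two hN.ne'
    have hkodd : Odd k := Nat.odd_iff.mpr (by
      rcases Nat.mod_two_eq_zero_or_one k with h | h
      · exact absurd (Nat.dvd_of_mod_eq_zero h) hk2
      · exact h)
    have hkdvd : k ∣ N := Nat.ordCompl_dvd N 2
    have hkpos : 0 < k := Nat.ordCompl_pos 2 hN.ne'
    have hNsplit : N = 2 ^ v * k := (Nat.ordProj_mul_ordCompl_eq_self N 2).symm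
    have horder : orderOf (φ ^ k) = 2 ^ v := by
      rw [orderOf_pow' φ hkpos.ne', ← hNdef, Nat.gcd_eq_right hkdvd, hNsplit,
        Nat.mul_div_cancel _ hkpos]
    have hbar_pow : ∀ (n : ℕ) (c : {c // c ∈ σ.cycleFactorsFinset}),
        ((φbar ^ n) c : Equiv.Perm α) = φ ^ n * ↑c * (φ ^ n)⁻¹ := by
      intro n
      induction n with
      | zero => intro c; simp
      | succ n ih =>
        intro c
        calc ((φbar ^ (n+1)) c : Equiv.Perm α) = ((φbar ^ n) (φbar c) : Equiv.Perm α) := by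
              rw [pow_succ, Equiv.Perm.mul_apply]
          _ = φ ^ n * (φbar c : Equiv.Perm α) * (φ ^ n)⁻¹ := ih _
          _ = φ ^ n * (φ * ↑c * φ⁻¹) * (φ ^ n)⁻¹ := by rw [hφbar c]
          _ = φ ^ (n+1) * ↑c * (φ ^ (n+1))⁻¹ := by rw [pow_succ]; group
    have hkey := key_two_pow σ (φ ^ k) (hcomm.pow_left k) hfix hodd horder (φbar ^ k)
      (fun c => hbar_pow k c)
    have hodd_pow : ∀ u : ℤˣ, u ^ k = u := by
      intro u
      rcases Int.units_eq_one_or u with h | h <;> rw [h]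
      · exact one_pow _
      · exact hkodd.neg_one_pow
    rw [map_pow, map_pow, hodd_pow, hodd_pow] at hkey
    exact hkey

end CVmain
end
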